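/- Let G be a directed social network, let p = 2 − √2 and q = 1 − √2/2. Then the expected revenue of the randomized Influence-and-Exploit strategy that places each buyer in the influence set independently with probability q, namely Σ_{A ⊆ V} q^{|A|}(1 − q)^{|V| − |A|} R_IE(A, p), equals (1 − q)p(1 − p)(q + p(1 − q)/2)W and is at least √2(2 − √2)(√2 − 1) ≈ 0.343 times the maximum revenue R_max(G). In particular, there exists A ⊆ V with R_IE(A, 2 − √2) ≥ √2(2 − √2)(√2 − 1)·R_max(G). -/
import Mathlib


open Finset

/-- The revenue of a marketing strategy `(π, p)` on a directed social network:
`R(π, p) = Σ_j p_j (1 - p_j) Σ_{i : π(i) < π(j)} p_i w_ij`. -/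
noncomputable def drevenue {V : Type*} [Fintype V] [DecidableEq V]
    (w : V → V → ℝ) (π : V ≃ Fin (Fintype.card V)) (p : V → ℝ) : ℝ :=
  ∑ j, p j * (1 - p j) * ∑ i ∈ univ.filter (fun i => π i < π j), p i * w i j

/-- The maximum revenue of a directed social network. -/
noncomputable def dmaxRev {V : Type*} [Fintype V] [DecidableEq V]
    (w : V → V → ℝ) : ℝ :=
  sSup {r | ∃ (π : V ≃ Fin (Fintype.card V)) (p : V → ℝ),
    (∀ i, 1/2 ≤ p i ∧ p i ≤ 1) ∧ r = drevenue w π p}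

/-- The expected revenue of the Influence-and-Exploit strategy `IE(A, p)` on a
directed social network. -/
noncomputable def dieRev {V : Type*} [Fintype V] [DecidableEq V]
    (w : V → V → ℝ) (A : Finset V) (p : ℝ) : ℝ :=
  p * (1 - p) * ∑ j ∈ Aᶜ,
    (∑ i ∈ A, w i j + (p / 2) * ∑ i ∈ Aᶜ \ {j}, w i j)

/-- `W`: total edge weight of a directed social network. -/
noncomputable def dTotalEdge {V : Type*} [Fintype V] [DecidableEq V]
    (w : V → V → ℝ) : ℝ :=
  ∑ i, ∑ j ∈ ({i} : Finset V)ᶜ, w i j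


section AuxIE

variable {V : Type*} [Fintype V] [DecidableEq V]

lemma sum_prod_compl_aux (f g : V → ℝ) :
    ∑ A : Finset V, (∏ v ∈ A, f v) * (∏ v ∈ Aᶜ, g v) = ∏ v, (f v + g v) := by
  rw [Finset.prod_add, Finset.powerset_univ]
  exact Finset.sum_congr rfl fun A _ => by rw [Finset.compl_eq_univ_sdiff]

lemma weight_sum_one_aux (q : ℝ) :
    ∑ A : Finset V, q ^ A.card * (1 - q) ^ (Fintype.card V - A.card) = 1 := by
  have h := sum_prod_compl_aux (fun _ : V => q) (fun _ : V => 1 - q)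
  simp only [Finset.prod_const, Finset.card_compl] at h
  simpa using h

lemma ind_one_aux (i j : V) (hij : i ≠ j) (q : ℝ) :
    ∑ A : Finset V, q ^ A.card * (1 - q) ^ (Fintype.card V - A.card)
      * (if i ∈ A ∧ j ∉ A then (1:ℝ) else 0) = q * (1 - q) := by
  have hprod : (∏ v : V, ((if v = j then (0:ℝ) else q) + (if v = i then 0 else 1 - q)))
      = q * (1 - q) := by
    rw [← Finset.prod_compl_mul_prod ({i, j} : Finset V), Finset.prod_pair hij,
      if_neg hij, if_pos rfl, if_pos rfl, if_neg hij.symm]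
    have h1 : (∏ v ∈ ({i, j} : Finset V)ᶜ,
        ((if v = j then (0:ℝ) else q) + (if v = i then 0 else 1 - q))) = 1 := by
      refine Finset.prod_eq_one fun v hv => ?_
      simp only [Finset.mem_compl, Finset.mem_insert, Finset.mem_singleton, not_or] at hv
      rw [if_neg hv.2, if_neg hv.1]; ring
    rw [h1]; ring
  have h := sum_prod_compl_aux (fun v : V => if v = j then 0 else q)
    (fun v : V => if v = i then 0 else 1 - q)
  rw [hprod] at h
  rw [← h]
  refine Finset.sum_congr rfl fun A _ => ?_
  by_cases hj : j ∈ A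
  · have hz : (∏ v ∈ A, if v = j then (0:ℝ) else q) = 0 :=
      Finset.prod_eq_zero hj (if_pos rfl)
    rw [hz, if_neg (by tauto)]; ring
  · by_cases hi : i ∈ A
    · have h1 : (∏ v ∈ A, if v = j then (0:ℝ) else q) = q ^ A.card := by
        rw [Finset.prod_congr rfl (fun v hv => if_neg (by rintro rfl; exact hj hv)),
          Finset.prod_const]
      have h2 : (∏ v ∈ Aᶜ, if v = i then (0:ℝ) else 1 - q)
          = (1 - q) ^ (Fintype.card V - A.card) := by
        rw [Finset.prod_congr rfl
          (fun v hv => if_neg (by rintro rfl; exact (Finset.mem_compl.mp hv) hi)),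
          Finset.prod_const, Finset.card_compl]
      rw [h1, h2, if_pos ⟨hi, hj⟩, mul_one]
    · have hz : (∏ v ∈ Aᶜ, if v = i then (0:ℝ) else 1 - q) = 0 :=
        Finset.prod_eq_zero (Finset.mem_compl.mpr hi) (if_pos rfl)
      rw [hz, if_neg (by tauto)]; ring

lemma ind_two_aux (i j : V) (hij : i ≠ j) (q : ℝ) :
    ∑ A : Finset V, q ^ A.card * (1 - q) ^ (Fintype.card V - A.card)
      * (if i ∉ A ∧ j ∉ A then (1:ℝ) else 0) = (1 - q) * (1 - q) := by
  have hprod : (∏ v : V, ((if v = i ∨ v = j then (0:ℝ) else q) + (1 - q)))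
      = (1 - q) * (1 - q) := by
    rw [← Finset.prod_compl_mul_prod ({i, j} : Finset V), Finset.prod_pair hij,
      if_pos (Or.inl rfl), if_pos (Or.inr rfl)]
    have h1 : (∏ v ∈ ({i, j} : Finset V)ᶜ,
        ((if v = i ∨ v = j then (0:ℝ) else q) + (1 - q))) = 1 := by
      refine Finset.prod_eq_one fun v hv => ?_
      simp only [Finset.mem_compl, Finset.mem_insert, Finset.mem_singleton, not_or] at hv
      rw [if_neg (by tauto)]; ring
    rw [h1]; ring
  have h := sum_prod_compl_aux (fun v : V => if v = i ∨ v = j then 0 else q)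
    (fun _ : V => 1 - q)
  rw [hprod] at h
  rw [← h]
  refine Finset.sum_congr rfl fun A _ => ?_
  by_cases hi : i ∈ A
  · have hz : (∏ v ∈ A, if v = i ∨ v = j then (0:ℝ) else q) = 0 :=
      Finset.prod_eq_zero hi (if_pos (Or.inl rfl))
    rw [hz, if_neg (by tauto)]; ring
  · by_cases hj : j ∈ A
    · have hz : (∏ v ∈ A, if v = i ∨ v = j then (0:ℝ) else q) = 0 :=
        Finset.prod_eq_zero hj (if_pos (Or.inr rfl))
      rw [hz, if_neg (by tauto)]; ring
    · have h1 : (∏ v ∈ A, if v = i ∨ v = j then (0:ℝ) else q) = q ^ A.card := by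
        rw [Finset.prod_congr rfl (fun v hv => if_neg (by
          rintro (rfl | rfl); exacts [hi hv, hj hv])), Finset.prod_const]
      rw [h1, Finset.prod_const, Finset.card_compl, if_pos ⟨hi, hj⟩, mul_one]

lemma dieRev_eq_aux (w : V → V → ℝ) (A : Finset V) (p : ℝ) :
    dieRev w A p = p * (1 - p) * ∑ j, ∑ i ∈ ({j} : Finset V)ᶜ,
      w i j * ((if i ∈ A ∧ j ∉ A then (1:ℝ) else 0)
        + (p / 2) * (if i ∉ A ∧ j ∉ A then (1:ℝ) else 0)) := by
  unfold dieRev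
  congr 1
  rw [← Finset.sum_add_sum_compl A]
  have hz : ∑ j ∈ A, ∑ i ∈ ({j} : Finset V)ᶜ,
      w i j * ((if i ∈ A ∧ j ∉ A then (1:ℝ) else 0)
        + (p / 2) * (if i ∉ A ∧ j ∉ A then (1:ℝ) else 0)) = 0 := by
    refine Finset.sum_eq_zero fun j hj => Finset.sum_eq_zero fun i _ => ?_
    rw [if_neg (by tauto), if_neg (by tauto)]; ring
  rw [hz, zero_add]
  refine Finset.sum_congr rfl fun j hj => ?_
  have hjA : j ∉ A := Finset.mem_compl.mp hj
  have key : ∀ i ∈ ({j} : Finset V)ᶜ,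
      w i j * ((if i ∈ A ∧ j ∉ A then (1:ℝ) else 0)
        + (p / 2) * (if i ∉ A ∧ j ∉ A then (1:ℝ) else 0))
      = (if i ∈ A then w i j else 0) + (p/2) * (if i ∈ Aᶜ \ {j} then w i j else 0) := by
    intro i hi
    have hij : i ≠ j := by simpa using hi
    by_cases hiA : i ∈ A
    · rw [if_pos ⟨hiA, hjA⟩, if_neg (by tauto), if_pos hiA, if_neg (by simp [hiA])]
      ring
    · rw [if_neg (by tauto), if_pos ⟨hiA, hjA⟩, if_neg hiA, if_pos (by simp [hiA, hij])]
      ring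
  have s1 : ({j} : Finset V)ᶜ ∩ A = A := by
    ext x
    simp only [Finset.mem_inter, Finset.mem_compl, Finset.mem_singleton]
    exact ⟨fun h => h.2, fun h => ⟨fun hx => hjA (hx ▸ h), h⟩⟩
  have s2 : ({j} : Finset V)ᶜ ∩ (Aᶜ \ {j}) = Aᶜ \ {j} := by
    ext x
    simp only [Finset.mem_inter, Finset.mem_compl, Finset.mem_singleton, Finset.mem_sdiff]
    tauto
  rw [Finset.sum_congr rfl key, Finset.sum_add_distrib, ← Finset.mul_sum,
    Finset.sum_ite_mem, Finset.sum_ite_mem, s1, s2]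

lemma total_swap_aux (w : V → V → ℝ) :
    ∑ j, ∑ i ∈ ({j} : Finset V)ᶜ, w i j = dTotalEdge w := by
  unfold dTotalEdge
  have e1 : ∀ j : V, ∑ i ∈ ({j} : Finset V)ᶜ, w i j = ∑ i, if i ≠ j then w i j else 0 := by
    intro j
    rw [← Finset.sum_filter]
    congr 1
    ext x; simp
  have e2 : ∀ i : V, ∑ j ∈ ({i} : Finset V)ᶜ, w i j = ∑ j, if j ≠ i then w i j else 0 := by
    intro i
    rw [← Finset.sum_filter]
    congr 1
    ext x; simp
  simp only [e1, e2]
  rw [Finset.sum_comm]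
  refine Finset.sum_congr rfl fun i _ => Finset.sum_congr rfl fun j _ => ?_
  simp [ne_comm]

lemma expected_eq_aux (w : V → V → ℝ) (p q : ℝ) :
    ∑ A : Finset V, q ^ A.card * (1 - q) ^ (Fintype.card V - A.card) * dieRev w A p
      = (1 - q) * p * (1 - p) * (q + p * (1 - q) / 2) * dTotalEdge w := by
  have e1 : ∀ A : Finset V,
      q ^ A.card * (1 - q) ^ (Fintype.card V - A.card) * dieRev w A p
      = ∑ j, ∑ i ∈ ({j} : Finset V)ᶜ,
          q ^ A.card * (1 - q) ^ (Fintype.card V - A.card) * (p * (1 - p)) *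
            (w i j * ((if i ∈ A ∧ j ∉ A then (1:ℝ) else 0)
              + (p / 2) * (if i ∉ A ∧ j ∉ A then (1:ℝ) else 0))) := by
    intro A
    rw [dieRev_eq_aux w A p, ← mul_assoc, Finset.mul_sum]
    exact Finset.sum_congr rfl fun j _ => Finset.mul_sum _ _ _
  rw [Finset.sum_congr rfl fun A _ => e1 A, Finset.sum_comm]
  have e2 : ∀ j : V, (∑ A : Finset V, ∑ i ∈ ({j} : Finset V)ᶜ,
      q ^ A.card * (1 - q) ^ (Fintype.card V - A.card) * (p * (1 - p)) *
        (w i j * ((if i ∈ A ∧ j ∉ A then (1:ℝ) else 0)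
          + (p / 2) * (if i ∉ A ∧ j ∉ A then (1:ℝ) else 0))))
      = ∑ i ∈ ({j} : Finset V)ᶜ,
          p * (1 - p) * (w i j * (q * (1 - q) + (p / 2) * ((1 - q) * (1 - q)))) := by
    intro j
    rw [Finset.sum_comm]
    refine Finset.sum_congr rfl fun i hi => ?_
    have hij : i ≠ j := by simpa using hi
    have split : ∀ A : Finset V,
        q ^ A.card * (1 - q) ^ (Fintype.card V - A.card) * (p * (1 - p)) *
          (w i j * ((if i ∈ A ∧ j ∉ A then (1:ℝ) else 0)
            + (p / 2) * (if i ∉ A ∧ j ∉ A then (1:ℝ) else 0)))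
        = p * (1 - p) * w i j *
            (q ^ A.card * (1 - q) ^ (Fintype.card V - A.card)
              * (if i ∈ A ∧ j ∉ A then (1:ℝ) else 0))
          + p * (1 - p) * w i j * (p/2) *
            (q ^ A.card * (1 - q) ^ (Fintype.card V - A.card)
              * (if i ∉ A ∧ j ∉ A then (1:ℝ) else 0)) := by
      intro A; ring
    rw [Finset.sum_congr rfl fun A _ => split A, Finset.sum_add_distrib,
      ← Finset.mul_sum, ← Finset.mul_sum, ind_one_aux i j hij q, ind_two_aux i j hij q]
    ring
  rw [Finset.sum_congr rfl fun j _ => e2 j, ← total_swap_aux w, Finset.mul_sum]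
  refine Finset.sum_congr rfl fun j _ => ?_
  rw [Finset.mul_sum]
  refine Finset.sum_congr rfl fun i _ => ?_
  ring

lemma dmaxRev_le_aux (w : V → V → ℝ) (hnonneg : ∀ i j, 0 ≤ w i j) :
    dmaxRev w ≤ dTotalEdge w / 4 := by
  have hW : 0 ≤ dTotalEdge w := by
    unfold dTotalEdge
    exact Finset.sum_nonneg fun i _ => Finset.sum_nonneg fun j _ => hnonneg i j
  refine Real.sSup_le ?_ (by linarith)
  rintro r ⟨π, pv, hpv, rfl⟩
  unfold drevenue
  rw [← total_swap_aux w]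
  rw [show (∑ j, ∑ i ∈ ({j} : Finset V)ᶜ, w i j) / 4
    = ∑ j, (1/4) * ∑ i ∈ ({j} : Finset V)ᶜ, w i j by rw [← Finset.mul_sum]; ring]
  refine Finset.sum_le_sum fun j _ => ?_
  have h1 : pv j * (1 - pv j) ≤ 1/4 := by nlinarith [sq_nonneg (pv j - 1/2)]
  have h3 : ∑ i ∈ Finset.univ.filter (fun i => π i < π j), pv i * w i j
      ≤ ∑ i ∈ ({j} : Finset V)ᶜ, w i j := by
    calc ∑ i ∈ Finset.univ.filter (fun i => π i < π j), pv i * w i j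
        ≤ ∑ i ∈ Finset.univ.filter (fun i => π i < π j), w i j := by
          refine Finset.sum_le_sum fun i _ => ?_
          nlinarith [hnonneg i j, (hpv i).1, (hpv i).2]
      _ ≤ ∑ i ∈ ({j} : Finset V)ᶜ, w i j := by
          refine Finset.sum_le_sum_of_subset_of_nonneg ?_ (fun i _ _ => hnonneg i j)
          intro i hi
          simp only [Finset.mem_filter, Finset.mem_univ, true_and] at hi
          simp only [Finset.mem_compl, Finset.mem_singleton]
          rintro rfl
          exact lt_irrefl _ hi
  have h4 : (0:ℝ) ≤ ∑ i ∈ Finset.univ.filter (fun i => π i < π j), pv i * w i j :=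
    Finset.sum_nonneg fun i _ => mul_nonneg (by linarith [(hpv i).1]) (hnonneg i j)
  calc pv j * (1 - pv j) * ∑ i ∈ Finset.univ.filter (fun i => π i < π j), pv i * w i j
      ≤ (1/4) * ∑ i ∈ Finset.univ.filter (fun i => π i < π j), pv i * w i j :=
        mul_le_mul_of_nonneg_right h1 h4
    _ ≤ (1/4) * ∑ i ∈ ({j} : Finset V)ᶜ, w i j := by linarith
  
end AuxIE

/-- For a directed social network with `p = 2 - √2` and `q = 1 - √2/2`, the expected
revenue of the randomized IE strategy that places each buyer in the influence set
independently with probability `q` equals `(1-q)p(1-p)(q + p(1-q)/2)W`, and it is at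
least `√2(2-√2)(√2-1)` times the maximum revenue; in particular some influence set
achieves this guarantee. -/
theorem randomized_IE_directed
    {V : Type*} [Fintype V] [DecidableEq V] (w : V → V → ℝ)
    (hnonneg : ∀ i j, 0 ≤ w i j) (hself : ∀ i, w i i = 0)
    (p q : ℝ)
    (hp : p = 2 - Real.sqrt 2)
    (hq : q = 1 - Real.sqrt 2 / 2) :
    (∑ A : Finset V,
        q ^ A.card * (1 - q) ^ (Fintype.card V - A.card) * dieRev w A p
      = (1 - q) * p * (1 - p) * (q + p * (1 - q) / 2) * dTotalEdge w) ∧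
    (∑ A : Finset V,
        q ^ A.card * (1 - q) ^ (Fintype.card V - A.card) * dieRev w A p
      ≥ Real.sqrt 2 * (2 - Real.sqrt 2) * (Real.sqrt 2 - 1) * dmaxRev w) ∧
    ∃ A : Finset V,
      dieRev w A (2 - Real.sqrt 2)
        ≥ Real.sqrt 2 * (2 - Real.sqrt 2) * (Real.sqrt 2 - 1) * dmaxRev w := by
  have hs2 : Real.sqrt 2 ^ 2 = 2 := Real.sq_sqrt (by norm_num)
  have hsge : (1:ℝ) ≤ Real.sqrt 2 := by nlinarith [Real.sqrt_nonneg 2]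
  have hsle : Real.sqrt 2 ≤ 3/2 := by nlinarith [Real.sqrt_nonneg 2]
  have hW : 0 ≤ dTotalEdge w :=
    Finset.sum_nonneg fun i _ => Finset.sum_nonneg fun j _ => hnonneg i j
  have hE := expected_eq_aux w p q
  have hcoef : (1 - q) * p * (1 - p) * (q + p * (1 - q) / 2)
      = Real.sqrt 2 * (2 - Real.sqrt 2) * (Real.sqrt 2 - 1) / 4 := by
    subst hp hq
    linear_combination (-(Real.sqrt 2) * (2 - Real.sqrt 2) * (Real.sqrt 2 - 1) / 8) * hs2
  have hc : 0 ≤ Real.sqrt 2 * (2 - Real.sqrt 2) * (Real.sqrt 2 - 1) := by nlinarith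
  have hmax := dmaxRev_le_aux w hnonneg
  have part2 : ∑ A : Finset V,
      q ^ A.card * (1 - q) ^ (Fintype.card V - A.card) * dieRev w A p
      ≥ Real.sqrt 2 * (2 - Real.sqrt 2) * (Real.sqrt 2 - 1) * dmaxRev w := by
    rw [hE, hcoef]
    calc Real.sqrt 2 * (2 - Real.sqrt 2) * (Real.sqrt 2 - 1) * dmaxRev w
        ≤ Real.sqrt 2 * (2 - Real.sqrt 2) * (Real.sqrt 2 - 1) * (dTotalEdge w / 4) :=
          mul_le_mul_of_nonneg_left hmax hc
      _ = Real.sqrt 2 * (2 - Real.sqrt 2) * (Real.sqrt 2 - 1) / 4 * dTotalEdge w := by ring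
  refine ⟨hE, part2, ?_⟩
  by_contra hcon
  push_neg at hcon
  have hq0 : 0 < q := by rw [hq]; nlinarith
  have hq1 : 0 < 1 - q := by rw [hq]; nlinarith
  have hlt : ∑ A : Finset V,
      q ^ A.card * (1 - q) ^ (Fintype.card V - A.card) * dieRev w A p
      < ∑ A : Finset V, q ^ A.card * (1 - q) ^ (Fintype.card V - A.card) *
        (Real.sqrt 2 * (2 - Real.sqrt 2) * (Real.sqrt 2 - 1) * dmaxRev w) := by
    refine Finset.sum_lt_sum_of_nonempty ⟨∅, Finset.mem_univ _⟩ fun A _ => ?_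
    refine mul_lt_mul_of_pos_left ?_ (mul_pos (pow_pos hq0 _) (pow_pos hq1 _))
    rw [hp]
    exact hcon A
  rw [← Finset.sum_mul, weight_sum_one_aux q, one_mul] at hlt
  linarith [part2]
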